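/- arXiv:1612.03648 — 3 statements merged into one kernel-verified Lean document; each statement's English description precedes it below -/
import Mathlib

section
/- Let a non-elementary group G act properly by isometries on a proper geodesic metric space (Y,d) with a contracting element, and fix a basepoint o ∈ Y. Then the dead-end depth of points of the orbit G·o is uniformly finite: there exists R > 0 such that for every g ∈ G there is a geodesic ray γ in Y with initial point o satisfying d(g·o, γ) ≤ R. -/
/-!
A contracting element `h` gives a quasi-geodesic contracting axis `n ↦ hⁿ • o`. A geodesic from
`x` ending far out on the axis, on the side opposite to the projection of `x`, stays close to the
axis from the moment it first comes near it, and the projection of its points to the axis moves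
coarsely continuously; so it passes uniformly close to `o`. Translating by `g`, every `g • o` is
uniformly close to geodesics from `o` of arbitrary length, and in the proper space `Y` these
accumulate, in the topology of pointwise convergence, to a geodesic ray from `o`.
-/

open Metric Set Filter

/-- A geodesic segment in a metric space, parametrized by arc length on `[0, len]`. -/
structure GeodesicSegment (Y : Type*) [MetricSpace Y] where
  len : ℝ
  len_nonneg : 0 ≤ len
  f : ℝ → Y
  isom : ∀ s ∈ Set.Icc (0 : ℝ) len, ∀ t ∈ Set.Icc (0 : ℝ) len, dist (f s) (f t) = |s - t|


namespace GeodesicSegment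

variable {Y : Type*} [MetricSpace Y]

/-- The initial point of a geodesic segment. -/
def source (γ : GeodesicSegment Y) : Y := γ.f 0

/-- The terminal point of a geodesic segment. -/
def target (γ : GeodesicSegment Y) : Y := γ.f γ.len

/-- The image of a geodesic segment. -/
def image (γ : GeodesicSegment Y) : Set Y := γ.f '' Set.Icc 0 γ.len

end GeodesicSegment

/-- A metric space is geodesic if any two points are joined by a geodesic segment. -/
def GeodesicSpace (Y : Type*) [MetricSpace Y] : Prop :=
  ∀ x y : Y, ∃ γ : GeodesicSegment Y, γ.source = x ∧ γ.target = y

/-- Nearest-point projection of a point to a subset. -/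
def proj {Y : Type*} [MetricSpace Y] (X : Set Y) (y : Y) : Set Y :=
  {x | x ∈ X ∧ dist y x = Metric.infDist y X}

/-- Nearest-point projection of a set to a subset. -/
def projSet {Y : Type*} [MetricSpace Y] (X A : Set Y) : Set Y :=
  ⋃ a ∈ A, proj X a

/-- `X` is `C`-contracting: any geodesic at distance at least `C` from `X`
has projection to `X` of diameter at most `C`. -/
def IsContractingWith {Y : Type*} [MetricSpace Y] (C : ℝ) (X : Set Y) : Prop :=
  ∀ γ : GeodesicSegment Y, (∀ p ∈ γ.image, C ≤ Metric.infDist p X) →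
    Metric.diam (projSet X γ.image) ≤ C

/-- `X` is contracting (with respect to geodesics). -/
def IsContracting {Y : Type*} [MetricSpace Y] (X : Set Y) : Prop :=
  ∃ C : ℝ, 1 ≤ C ∧ IsContractingWith C X

/-- The orbit of the basepoint under the cyclic group generated by `h`. -/
def cyclicOrbit {Y G : Type*} [MetricSpace Y] [Group G] [MulAction G Y]
    (o : Y) (h : G) : Set Y :=
  {y | ∃ n : ℤ, y = h ^ n • o}

/-- `g` is a contracting element for the action with basepoint `o`. -/
def IsContractingElement {Y G : Type*} [MetricSpace Y] [Group G] [MulAction G Y]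
    (o : Y) (g : G) : Prop :=
  ¬ IsOfFinOrder g ∧ IsContracting (cyclicOrbit o g) ∧
    ∃ c : ℝ, 1 ≤ c ∧ ∀ m n : ℤ,
      (|m - n| : ℝ) / c - c ≤ dist (g ^ m • o) (g ^ n • o) ∧
        dist (g ^ m • o) (g ^ n • o) ≤ c * (|m - n| : ℝ) + c

/-- A group is non-elementary if it has no finite-index subgroup isomorphic to `ℤ`
or to the trivial group. -/
def NonElementary (G : Type*) [Group G] : Prop :=
  ¬ ∃ H : Subgroup G, H.index ≠ 0 ∧
    (Nonempty (H ≃* Multiplicative ℤ) ∨ Nonempty (H ≃* PUnit.{1}))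

/-- The critical exponent of a subset `Γ ⊆ G` for the action with basepoint `o`. -/
noncomputable def critExp {Y G : Type*} [MetricSpace Y] [Group G] [MulAction G Y]
    (o : Y) (Γ : Set G) : ℝ :=
  Filter.limsup
    (fun n : ℕ => Real.log ({g ∈ Γ | dist o (g • o) ≤ (n : ℝ)}.ncard) / (n : ℝ))
    Filter.atTop

/-- The concave region `𝒪_M`: elements `g` such that some geodesic between
`B(o,M)` and `B(g·o,M)` has its interior outside the `M`-neighborhood of the orbit. -/
def concaveRegion {Y : Type*} (G : Type*) [MetricSpace Y] [Group G] [MulAction G Y]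
    (o : Y) (M : ℝ) : Set G :=
  {g | ∃ γ : GeodesicSegment Y,
    γ.source ∈ Metric.closedBall o M ∧ γ.target ∈ Metric.closedBall (g • o) M ∧
    ∀ t ∈ Set.Ioo (0 : ℝ) γ.len, M < Metric.infDist (γ.f t) (MulAction.orbit G o)}

/-- Statistically convex-cocompact (SCC) action. -/
def IsSCC {Y : Type*} (G : Type*) [MetricSpace Y] [Group G] [MulAction G Y]
    (o : Y) : Prop :=
  ∃ M : ℝ, 0 < M ∧ critExp o (concaveRegion G o M) < critExp o (Set.univ : Set G)

/-- A geodesic contains no `(ε, f)`-barrier. -/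
def BarrierFree {Y G : Type*} [MetricSpace Y] [Group G] [MulAction G Y]
    (o : Y) (ε : ℝ) (f : G) (γ : GeodesicSegment Y) : Prop :=
  ¬ ∃ h : G, Metric.infDist (h • o) γ.image ≤ ε ∧
      Metric.infDist ((h * f) • o) γ.image ≤ ε

/-- The set `𝒱_{ε,M,f}` of `(ε, M, f)`-barrier-free elements. -/
def barrierFreeSet {Y G : Type*} [MetricSpace Y] [Group G] [MulAction G Y]
    (o : Y) (ε M : ℝ) (f : G) : Set G :=
  {g | ∃ γ : GeodesicSegment Y, γ.source ∈ Metric.closedBall o M ∧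
    γ.target ∈ Metric.closedBall (g • o) M ∧ BarrierFree o ε f γ}

/-- The subgroup-like set `E(h)` of elements commensurating the orbit of `⟨h⟩`. -/
def Egroup {Y G : Type*} [MetricSpace Y] [Group G] [MulAction G Y]
    (o : Y) (h : G) : Set G :=
  {g | ∃ r : ℝ, 0 < r ∧
    (∀ y ∈ (g • ·) '' cyclicOrbit o h, Metric.infDist y (cyclicOrbit o h) ≤ r) ∧
    (∀ y ∈ cyclicOrbit o h, Metric.infDist y ((g • ·) '' cyclicOrbit o h) ≤ r)}

/-- The axis `Ax(h) = E(h)·o` of a contracting element. -/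
def axisSet {Y G : Type*} [MetricSpace Y] [Group G] [MulAction G Y]
    (o : Y) (h : G) : Set Y :=
  (fun g : G => g • o) '' Egroup o h

namespace GeodesicSegment

variable {Y : Type*} [MetricSpace Y] (σ : GeodesicSegment Y)

lemma dist_eq_sub {r s : ℝ} (hr : 0 ≤ r) (hrs : r ≤ s) (hs : s ≤ σ.len) :
    dist (σ.f r) (σ.f s) = s - r := by
  rw [σ.isom r ⟨hr, hrs.trans hs⟩ s ⟨hr.trans hrs, hs⟩, abs_sub_comm,
    abs_of_nonneg (sub_nonneg.2 hrs)]

lemma dist_source {t : ℝ} (ht : t ∈ Icc 0 σ.len) : dist σ.source (σ.f t) = t :=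
  (σ.dist_eq_sub le_rfl ht.1 ht.2).trans (sub_zero t)

lemma dist_source_target : dist σ.source σ.target = σ.len :=
  σ.dist_source (right_mem_Icc.2 σ.len_nonneg)

lemma lipschitzOnWith : LipschitzOnWith 1 σ.f (Icc 0 σ.len) :=
  LipschitzOnWith.of_dist_le_mul fun s hs t ht => by
    rw [σ.isom s hs t ht, NNReal.coe_one, one_mul, Real.dist_eq]

lemma isCompact_image : IsCompact σ.image :=
  isCompact_Icc.image_of_continuousOn σ.lipschitzOnWith.continuousOn

lemma exists_dist_le_of_infDist_le {p : Y} {K : ℝ} (h : infDist p σ.image ≤ K) :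
    ∃ t ∈ Icc 0 σ.len, dist p (σ.f t) ≤ K := by
  obtain ⟨_, ⟨t, ht, rfl⟩, hd⟩ :=
    σ.isCompact_image.exists_infDist_eq_dist ((nonempty_Icc.2 σ.len_nonneg).image σ.f) p
  exact ⟨t, ht, hd ▸ h⟩

def restrict {u v : ℝ} (hu : 0 ≤ u) (huv : u ≤ v) (hv : v ≤ σ.len) :
    GeodesicSegment Y where
  len := v - u
  len_nonneg := sub_nonneg.2 huv
  f t := σ.f (u + t)
  isom s hs t ht := by
    rw [σ.isom (u + s) ⟨by linarith [hs.1], by linarith [hs.2]⟩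
      (u + t) ⟨by linarith [ht.1], by linarith [ht.2]⟩, add_sub_add_left_eq_sub]

lemma image_restrict {u v : ℝ} (hu : 0 ≤ u) (huv : u ≤ v) (hv : v ≤ σ.len) :
    (σ.restrict hu huv hv).image = σ.f '' Icc u v := by
  simp only [image, restrict]
  rw [← image_image σ.f (u + ·), image_const_add_Icc, add_zero, add_sub_cancel]

def map {Z : Type*} [MetricSpace Z] (φ : Y → Z) (hφ : Isometry φ) : GeodesicSegment Z where
  len := σ.len
  len_nonneg := σ.len_nonneg
  f := φ ∘ σ.f
  isom s hs t ht := by rw [Function.comp_apply, Function.comp_apply, hφ.dist_eq, σ.isom s hs t ht]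

lemma image_map {Z : Type*} [MetricSpace Z] (φ : Y → Z) (hφ : Isometry φ) :
    (σ.map φ hφ).image = φ '' σ.image :=
  image_comp φ σ.f _

noncomputable def extend : ℝ → Y := fun t => σ.f (projIcc 0 σ.len σ.len_nonneg t)

lemma extend_of_mem {t : ℝ} (ht : t ∈ Icc 0 σ.len) : σ.extend t = σ.f t := by
  rw [extend, projIcc_of_mem _ ht]

lemma lipschitzWith_extend : LipschitzWith 1 σ.extend :=
  LipschitzWith.of_dist_le_mul fun s t => by
    rw [extend, extend, σ.isom _ (projIcc 0 σ.len σ.len_nonneg s).2 _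
      (projIcc 0 σ.len σ.len_nonneg t).2, NNReal.coe_one, one_mul, Real.dist_eq]
    exact abs_projIcc_sub_projIcc _

end GeodesicSegment

section Contracting

variable {Y : Type*} [MetricSpace Y]

lemma isBounded_projSet {X A : Set Y} (hX : X.Nonempty) (hA : Bornology.IsBounded A) :
    Bornology.IsBounded (projSet X A) := by
  obtain ⟨x₀, hx₀⟩ := hX
  obtain ⟨r, hr⟩ := hA.subset_closedBall x₀
  refine (isBounded_closedBall (x := x₀) (r := 2 * r)).subset ?_
  simp only [projSet, iUnion_subset_iff]
  rintro a ha w ⟨-, hw⟩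
  have hax : dist a x₀ ≤ r := hr ha
  have : infDist a X ≤ dist a x₀ := infDist_le_dist_of_mem hx₀
  rw [mem_closedBall]
  calc dist w x₀ ≤ dist a w + dist a x₀ := dist_triangle_left _ _ _
    _ ≤ 2 * r := by linarith

lemma IsContractingWith.dist_le_of_subsegment {C : ℝ} {X : Set Y} (hX : IsContractingWith C X)
    (hXne : X.Nonempty) (σ : GeodesicSegment Y) {u v : ℝ} (hu : 0 ≤ u) (huv : u ≤ v)
    (hv : v ≤ σ.len) (hfar : ∀ s ∈ Icc u v, C ≤ infDist (σ.f s) X) {p q : Y}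
    (hp : p ∈ proj X (σ.f u)) (hq : q ∈ proj X (σ.f v)) : dist p q ≤ C := by
  set τ := σ.restrict hu huv hv
  have hτ : τ.image = σ.f '' Icc u v := σ.image_restrict hu huv hv
  have hmem : ∀ {s : ℝ} {w : Y}, s ∈ Icc u v → w ∈ proj X (σ.f s) →
      w ∈ projSet X τ.image :=
    fun hs hw => mem_biUnion (hτ ▸ mem_image_of_mem σ.f hs) hw
  -- `diam` is `0` on unbounded sets, so bounding distances by it needs boundedness
  refine (dist_le_diam_of_mem (isBounded_projSet hXne τ.isCompact_image.isBounded)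
    (hmem ⟨le_rfl, huv⟩ hp) (hmem ⟨huv, le_rfl⟩ hq)).trans (hX τ ?_)
  rw [hτ]
  rintro _ ⟨s, hs, rfl⟩
  exact hfar s hs

end Contracting

section HittingTimes

variable {φ : ℝ → ℝ} {a b C : ℝ}

lemma exists_first_le_of_continuousOn (hφ : ContinuousOn φ (Icc a b)) (hab : a ≤ b)
    (ha : C ≤ φ a) (hb : φ b ≤ C) :
    ∃ v ∈ Icc a b, φ v ≤ C ∧ ∀ s ∈ Icc a v, C ≤ φ s := by
  have hT : IsCompact (Icc a b ∩ φ ⁻¹' Iic C) :=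
    isCompact_Icc.of_isClosed_subset
      (hφ.preimage_isClosed_of_isClosed isClosed_Icc isClosed_Iic) inter_subset_left
  obtain ⟨v, ⟨hv, hφv⟩, hmin⟩ := hT.exists_isLeast ⟨b, right_mem_Icc.2 hab, hb⟩
  refine ⟨v, hv, hφv, ?_⟩
  have hbefore : ∀ s ∈ Ico a v, C ≤ φ s := fun s hs =>
    le_of_not_ge fun h => (hmin ⟨⟨hs.1, hs.2.le.trans hv.2⟩, h⟩).not_gt hs.2
  rcases hv.1.eq_or_lt with rfl | hav
  · intro s hs
    rwa [le_antisymm hs.2 hs.1]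
  · have hcl : IsClosed (Icc a v ∩ φ ⁻¹' Ici C) :=
      (hφ.mono (Icc_subset_Icc_right hv.2)).preimage_isClosed_of_isClosed isClosed_Icc
        isClosed_Ici
    have := closure_minimal (s := Ico a v)
      (fun s hs => (⟨Ico_subset_Icc_self hs, hbefore s hs⟩ : s ∈ Icc a v ∩ φ ⁻¹' Ici C))
      hcl
    rw [closure_Ico hav.ne] at this
    exact fun s hs => (this hs).2

lemma exists_last_le_of_continuousOn (hφ : ContinuousOn φ (Icc a b)) (hab : a ≤ b)
    (ha : φ a ≤ C) (hb : C ≤ φ b) :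
    ∃ u ∈ Icc a b, φ u ≤ C ∧ ∀ s ∈ Icc u b, C ≤ φ s := by
  have hψ : ContinuousOn (fun s => φ (-s)) (Icc (-b) (-a)) :=
    hφ.comp continuous_neg.continuousOn fun s hs => ⟨le_neg.1 hs.2, neg_le.1 hs.1⟩
  obtain ⟨v, hv, hψv, hfar⟩ :=
    exists_first_le_of_continuousOn hψ (neg_le_neg hab) (by simpa using hb) (by simpa using ha)
  refine ⟨-v, ⟨le_neg.2 hv.2, neg_le.1 hv.1⟩, hψv, fun s hs => ?_⟩
  simpa using hfar (-s) ⟨neg_le_neg hs.2, neg_le.1 hs.1⟩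

lemma exists_mem_Icc_of_coarse_step {f : ℝ → ℝ} {M : ℝ} (hab : a ≤ b)
    (hstep : ∀ s ∈ Icc a b, ∀ t ∈ Icc a b, |s - t| ≤ 1 → f t ≤ f s + M)
    (ha : f a ≤ M) (hb : 0 ≤ f b) : ∃ t ∈ Icc a b, 0 ≤ f t ∧ f t ≤ M := by
  by_cases ha₀ : 0 ≤ f a
  · exact ⟨a, left_mem_Icc.2 hab, ha₀, ha⟩
  set S := {t ∈ Icc a b | 0 ≤ f t}
  have hSbdd : BddBelow S := ⟨a, fun t ht => ht.1.1⟩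
  obtain ⟨t, ⟨ht, hft⟩, htS⟩ :=
    exists_lt_of_csInf_lt (⟨b, right_mem_Icc.2 hab, hb⟩ : S.Nonempty) (lt_add_one (sInf S))
  -- the point `s` one unit before `t` (or `a`) is not yet in `S`
  set s := max a (t - 1)
  have hs : s ∈ Icc a b := ⟨le_max_left _ _, max_le hab (by linarith [ht.2])⟩
  have hfs : f s < 0 := by
    refine lt_of_not_ge fun h => ?_
    rcases max_cases a (t - 1) with ⟨hsa, -⟩ | ⟨hst, -⟩
    · exact ha₀ (hsa ▸ h)
    · linarith [csInf_le hSbdd ⟨hs, h⟩]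
  have := hstep s hs t ht (abs_le.2 ⟨by linarith [le_max_right a (t - 1)],
    by linarith [max_le ht.1 (by linarith : t - 1 ≤ t)]⟩)
  exact ⟨t, ht, hft, by linarith⟩

end HittingTimes

section FellowTravel

variable {Y : Type*} [MetricSpace Y]

lemma IsContractingWith.infDist_le_of_excursion {C : ℝ} {X : Set Y}
    (hX : IsContractingWith C X) (hproj : ∀ y, (proj X y).Nonempty) (σ : GeodesicSegment Y)
    {u t v : ℝ} (hu : 0 ≤ u) (hut : u ≤ t) (htv : t ≤ v) (hv : v ≤ σ.len)
    (hφu : infDist (σ.f u) X ≤ C) (hφv : infDist (σ.f v) X ≤ C)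
    (hfar : ∀ s ∈ Icc u v, C ≤ infDist (σ.f s) X) : infDist (σ.f t) X ≤ 4 * C := by
  obtain ⟨p, hp⟩ := hproj (σ.f u)
  obtain ⟨q, hq⟩ := hproj (σ.f v)
  have hpq := hX.dist_le_of_subsegment ⟨p, hp.1⟩ σ hu (hut.trans htv) hv hfar hp hq
  -- the excursion has length at most `3C`
  have huv : v - u ≤ 3 * C := by
    calc v - u = dist (σ.f u) (σ.f v) := (σ.dist_eq_sub hu (hut.trans htv) hv).symm
      _ ≤ dist (σ.f u) p + dist p q + dist q (σ.f v) := dist_triangle4 _ _ _ _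
      _ ≤ 3 * C := by rw [hp.2, dist_comm q, hq.2]; linarith
  calc infDist (σ.f t) X ≤ infDist (σ.f u) X + dist (σ.f t) (σ.f u) := infDist_le_infDist_add_dist
    _ ≤ 4 * C := by rw [dist_comm, σ.dist_eq_sub hu hut (htv.trans hv)]; linarith

theorem IsContractingWith.exists_fellow_travel {C : ℝ} {X : Set Y} (hX : IsContractingWith C X)
    (hproj : ∀ y, (proj X y).Nonempty) (σ : GeodesicSegment Y)
    (hend : infDist σ.target X ≤ C) :
    ∃ t₀ ∈ Icc 0 σ.len, (∀ t ∈ Icc t₀ σ.len, infDist (σ.f t) X ≤ 4 * C) ∧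
      ∀ p ∈ proj X σ.source, dist (σ.f t₀) p ≤ 2 * C := by
  set φ := fun t => infDist (σ.f t) X
  have hφ : ContinuousOn φ (Icc 0 σ.len) :=
    (continuous_infDist_pt X).comp_continuousOn σ.lipschitzOnWith.continuousOn
  have hC : 0 ≤ C := infDist_nonneg.trans hend
  obtain ⟨t₀, ht₀, hφt₀, hentry⟩ : ∃ t₀ ∈ Icc 0 σ.len, φ t₀ ≤ C ∧
      ∀ p ∈ proj X σ.source, dist (σ.f t₀) p ≤ 2 * C := by
    by_cases h₀ : φ 0 ≤ C
    · exact ⟨0, left_mem_Icc.2 σ.len_nonneg, h₀, fun p hp => (hp.2.trans_le h₀).trans (by linarith)⟩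
    obtain ⟨t₀, ht₀, hφt₀, hfar⟩ :=
      exists_first_le_of_continuousOn hφ σ.len_nonneg (le_of_not_ge h₀) hend
    refine ⟨t₀, ht₀, hφt₀, fun p hp => ?_⟩
    obtain ⟨q, hq⟩ := hproj (σ.f t₀)
    have hpq := hX.dist_le_of_subsegment ⟨p, hp.1⟩ σ le_rfl ht₀.1 ht₀.2 hfar hp hq
    calc dist (σ.f t₀) p ≤ dist (σ.f t₀) q + dist p q := dist_triangle_right _ _ _
      _ ≤ 2 * C := by rw [hq.2]; linarith
  refine ⟨t₀, ht₀, fun t ht => ?_, hentry⟩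
  by_cases hφt : φ t ≤ C
  · exact hφt.trans (by linarith)
  obtain ⟨u, hu, hφu, hfar₁⟩ := exists_last_le_of_continuousOn
    (hφ.mono (Icc_subset_Icc ht₀.1 ht.2)) ht.1 hφt₀ (le_of_not_ge hφt)
  obtain ⟨v, hv, hφv, hfar₂⟩ := exists_first_le_of_continuousOn
    (hφ.mono (Icc_subset_Icc (ht₀.1.trans ht.1) le_rfl)) ht.2 (le_of_not_ge hφt) hend
  exact hX.infDist_le_of_excursion hproj σ (ht₀.1.trans hu.1) hu.2 hv.1 hv.2 hφu hφv
    fun s hs => (le_total s t).elim (fun h => hfar₁ s ⟨hs.1, h⟩) fun h => hfar₂ s ⟨h, hs.2⟩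

end FellowTravel

section QuasiGeodesicAxis

variable {Y : Type*} [MetricSpace Y] {e : ℤ → Y} {c C : ℝ}

lemma abs_sub_le_of_dist_le (hc : 0 < c)
    (hlow : ∀ m n : ℤ, |(m : ℝ) - n| / c - c ≤ dist (e m) (e n)) {m n : ℤ} {D : ℝ}
    (h : dist (e m) (e n) ≤ D) : |(m : ℝ) - n| ≤ c * (D + c) := by
  have := hlow m n
  rw [← div_le_iff₀' hc]
  linarith

lemma exists_mem_proj_range (hc : 0 < c)
    (hlow : ∀ m n : ℤ, |(m : ℝ) - n| / c - c ≤ dist (e m) (e n)) (y : Y) :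
    ∃ j, e j ∈ proj (range e) y := by
  set r := dist y (e 0)
  -- only finitely many `e j` are as close to `y` as `e 0`
  have hfin : {j : ℤ | dist y (e j) ≤ r}.Finite := by
    refine (finite_Icc (-⌈c * (2 * r + c)⌉) ⌈c * (2 * r + c)⌉).subset fun j hj => ?_
    have hj0 : dist (e j) (e 0) ≤ 2 * r := by
      linarith [dist_triangle_left (e j) (e 0) y, show dist y (e j) ≤ r from hj]
    have := (abs_sub_le_of_dist_le hc hlow hj0).trans (Int.le_ceil _)
    rw [Int.cast_zero, sub_zero] at this
    exact abs_le.1 (by exact_mod_cast this)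
  have h₀ : dist y (e 0) ≤ r := le_rfl
  obtain ⟨j, -, hmin⟩ := Set.exists_min_image _ (fun j => dist y (e j)) hfin ⟨0, h₀⟩
  refine ⟨j, mem_range_self j, le_antisymm ?_ (infDist_le_dist_of_mem (mem_range_self j))⟩
  rw [le_infDist (range_nonempty e)]
  rintro _ ⟨i, rfl⟩
  exact (le_total (dist y (e i)) r).elim (hmin i) fun h => (hmin 0 h₀).trans h

lemma index_le_index_add_dist (hc : 0 < c)
    (hlow : ∀ m n : ℤ, |(m : ℝ) - n| / c - c ≤ dist (e m) (e n)) (y y' : Y) (i j : ℤ) :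
    (j : ℝ) ≤ i + c * (dist y (e i) + dist y y' + dist y' (e j) + c) := by
  have hd : dist (e j) (e i) ≤ dist y (e i) + dist y y' + dist y' (e j) := by
    linarith [dist_triangle4 (e j) y' y (e i), dist_comm (e j) y', dist_comm y' y]
  linarith [(abs_le.1 (abs_sub_le_of_dist_le hc hlow hd)).2]

theorem infDist_le_of_proj_nonpos (hc : 1 ≤ c) (hC : 0 ≤ C)
    (hlow : ∀ m n : ℤ, |(m : ℝ) - n| / c - c ≤ dist (e m) (e n))
    (hup : ∀ m n : ℤ, dist (e m) (e n) ≤ c * |(m : ℝ) - n| + c)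
    (hX : IsContractingWith C (range e)) {x : Y} {k n : ℤ} (hk : e k ∈ proj (range e) x)
    (hk₀ : k ≤ 0) (hn : c * c ≤ n) (σ : GeodesicSegment Y) (hσ₀ : σ.source = x)
    (hσ₁ : σ.target = e n) :
    infDist (e 0) σ.image ≤ c ^ 2 * (8 * C + c + 1) + 4 * C + c := by
  have hc₀ : 0 < c := by linarith
  have hproj := exists_mem_proj_range hc₀ hlow
  have hn₀ : infDist (σ.f σ.len) (range e) = 0 := by
    rw [← GeodesicSegment.target, hσ₁, infDist_zero_of_mem (mem_range_self n)]
  obtain ⟨t₀, ht₀, hnear, hentry⟩ := hX.exists_fellow_travel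
    (fun y => (hproj y).elim fun _ hj => ⟨_, hj⟩) σ (hn₀.trans_le hC)
  choose J hJ using hproj
  have hnearJ : ∀ t ∈ Icc t₀ σ.len, dist (σ.f t) (e (J (σ.f t))) ≤ 4 * C :=
    fun t ht => (hJ _).2 ▸ hnear t ht
  -- the index of the projection to the axis moves coarsely continuously from near `k ≤ 0`
  -- to near `n ≥ 0`
  set M := c * (8 * C + c + 1)
  have hstep : ∀ s ∈ Icc t₀ σ.len, ∀ t ∈ Icc t₀ σ.len, |s - t| ≤ 1 →
      (J (σ.f t) : ℝ) ≤ J (σ.f s) + M := by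
    intro s hs t ht hst
    have hst' : dist (σ.f s) (σ.f t) ≤ 1 :=
      (σ.isom s ⟨ht₀.1.trans hs.1, hs.2⟩ t ⟨ht₀.1.trans ht.1, ht.2⟩).trans_le hst
    have hsum : dist (σ.f s) (e (J (σ.f s))) + dist (σ.f s) (σ.f t) +
        dist (σ.f t) (e (J (σ.f t))) + c ≤ 8 * C + c + 1 := by
      linarith [hnearJ s hs, hnearJ t ht]
    linarith [index_le_index_add_dist hc₀ hlow (σ.f s) (σ.f t) (J (σ.f s)) (J (σ.f t)),
      mul_le_mul_of_nonneg_left hsum hc₀.le]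
  have hstart : (J (σ.f t₀) : ℝ) ≤ M := by
    have hsum : dist (σ.f t₀) (e k) + dist (σ.f t₀) (σ.f t₀) +
        dist (σ.f t₀) (e (J (σ.f t₀))) + c ≤ 8 * C + c + 1 := by
      linarith [hentry _ (hσ₀ ▸ hk), dist_self (σ.f t₀), hnearJ t₀ ⟨le_rfl, ht₀.2⟩]
    have hk' : (k : ℝ) ≤ 0 := by exact_mod_cast hk₀
    linarith [index_le_index_add_dist hc₀ hlow (σ.f t₀) (σ.f t₀) k (J (σ.f t₀)),
      mul_le_mul_of_nonneg_left hsum hc₀.le]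
  have hfinish : (0 : ℝ) ≤ J (σ.f σ.len) := by
    have := index_le_index_add_dist hc₀ hlow (e n) (e n) (J (e n)) n
    rw [(hJ _).2, infDist_zero_of_mem (mem_range_self n), dist_self, zero_add, zero_add,
      zero_add] at this
    rw [show σ.f σ.len = e n from hσ₁]
    linarith
  obtain ⟨t, ht, hJt₀, hJtM⟩ := exists_mem_Icc_of_coarse_step ht₀.2 hstep hstart hfinish
  have h0J : dist (e 0) (e (J (σ.f t))) ≤ c * M + c := by
    have := hup 0 (J (σ.f t))
    rw [Int.cast_zero, zero_sub, abs_neg, abs_of_nonneg hJt₀] at this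
    linarith [mul_le_mul_of_nonneg_left hJtM hc₀.le]
  calc infDist (e 0) σ.image ≤ dist (e 0) (σ.f t) :=
        infDist_le_dist_of_mem (mem_image_of_mem σ.f ⟨ht₀.1.trans ht.1, ht.2⟩)
    _ ≤ dist (e 0) (e (J (σ.f t))) + dist (σ.f t) (e (J (σ.f t))) := dist_triangle_right _ _ _
    _ ≤ c ^ 2 * (8 * C + c + 1) + 4 * C + c := by linarith [hnearJ t ht]

theorem exists_far_target_of_proj_nonpos (hc : 1 ≤ c) (hC : 0 ≤ C)
    (hlow : ∀ m n : ℤ, |(m : ℝ) - n| / c - c ≤ dist (e m) (e n))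
    (hup : ∀ m n : ℤ, dist (e m) (e n) ≤ c * |(m : ℝ) - n| + c)
    (hX : IsContractingWith C (range e)) {x : Y} {k : ℤ} (hk : e k ∈ proj (range e) x)
    (hk₀ : k ≤ 0) (D : ℝ) :
    ∃ z, D ≤ dist (e 0) z ∧ ∀ σ : GeodesicSegment Y, σ.source = x → σ.target = z →
      infDist (e 0) σ.image ≤ c ^ 2 * (8 * C + c + 1) + 4 * C + c := by
  have hc₀ : 0 < c := by linarith
  set n := ⌈max (c * c) (c * (D + c))⌉
  have hn : max (c * c) (c * (D + c)) ≤ n := Int.le_ceil _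
  have hn₀ : c * c ≤ n := (le_max_left _ _).trans hn
  refine ⟨e n, ?_, fun σ hσ₀ hσ₁ =>
    infDist_le_of_proj_nonpos hc hC hlow hup hX hk hk₀ hn₀ σ hσ₀ hσ₁⟩
  have := hlow 0 n
  rw [Int.cast_zero, zero_sub, abs_neg, abs_of_nonneg (by nlinarith)] at this
  have : D + c ≤ n / c := (le_div_iff₀' hc₀).2 ((le_max_right _ _).trans hn)
  linarith

theorem exists_far_target (hc : 1 ≤ c) (hC : 0 ≤ C)
    (hlow : ∀ m n : ℤ, |(m : ℝ) - n| / c - c ≤ dist (e m) (e n))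
    (hup : ∀ m n : ℤ, dist (e m) (e n) ≤ c * |(m : ℝ) - n| + c)
    (hX : IsContractingWith C (range e)) (x : Y) (D : ℝ) :
    ∃ z, D ≤ dist (e 0) z ∧ ∀ σ : GeodesicSegment Y, σ.source = x → σ.target = z →
      infDist (e 0) σ.image ≤ c ^ 2 * (8 * C + c + 1) + 4 * C + c := by
  obtain ⟨k, hk⟩ := exists_mem_proj_range (by linarith) hlow x
  rcases le_or_gt k 0 with hk₀ | hk₀
  · exact exists_far_target_of_proj_nonpos hc hC hlow hup hX hk hk₀ D
  -- `x` projects to the positive side: aim at the negative side by reversing the axis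
  set e' : ℤ → Y := fun i => e (-i)
  have hrange : range e' = range e := (Equiv.neg ℤ).surjective.range_comp e
  have habs : ∀ m n : ℤ, |((-m : ℤ) : ℝ) - (-n : ℤ)| = |(m : ℝ) - n| := fun m n => by
    push_cast
    rw [neg_sub_neg, abs_sub_comm]
  have := exists_far_target_of_proj_nonpos (e := e') hc hC
    (fun m n => habs m n ▸ hlow (-m) (-n)) (fun m n => habs m n ▸ hup (-m) (-n))
    (hrange ▸ hX) (k := -k) (by simpa [e', hrange] using hk) (by omega) D
  simpa [e'] using this

end QuasiGeodesicAxis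

section RayLimit

variable {Y : Type*} [MetricSpace Y] [ProperSpace Y]

lemma isCompact_setOf_lipschitzWith {α : Type*} [PseudoMetricSpace α] (K : NNReal) (a : α)
    (o : Y) : IsCompact {u : α → Y | LipschitzWith K u ∧ u a = o} := by
  refine (isCompact_univ_pi fun t : α => isCompact_closedBall o (K * dist t a)).of_isClosed_subset
    ((isClosed_setOfPred_lipschitzWith K).inter (isClosed_eq (continuous_apply a)
      continuous_const)) ?_
  rintro u ⟨hu, rfl⟩ t -
  exact hu.dist_le_mul t a

theorem exists_geodesicRay_of_segments {o p : Y} {K : ℝ}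
    (h : ∀ n : ℕ, ∃ γ : GeodesicSegment Y, γ.source = o ∧ (n : ℝ) ≤ γ.len ∧
      infDist p γ.image ≤ K) :
    ∃ γ : ℝ → Y, γ 0 = o ∧
      (∀ s ∈ Ici (0 : ℝ), ∀ t ∈ Ici (0 : ℝ), dist (γ s) (γ t) = |s - t|) ∧
      infDist p (γ '' Ici 0) ≤ K := by
  choose γ hγo hγlen hγp using h
  choose t ht htp using fun n => (γ n).exists_dist_le_of_infDist_le (hγp n)
  have hT : ∀ n, t n ∈ Icc 0 (dist o p + K) := fun n => by
    have h := (γ n).dist_source (ht n)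
    rw [hγo n] at h
    exact ⟨(ht n).1, by
      linarith [dist_triangle o p ((γ n).f (t n)), dist_comm p ((γ n).f (t n)), htp n]⟩
  -- a cluster point `(f, t₁)` of the extended segments with their times of closest approach
  obtain ⟨⟨f, t₁⟩, ⟨⟨hf, hf₀⟩, ht₁⟩, hclus⟩ :=
    ((isCompact_setOf_lipschitzWith 1 0 o).prod isCompact_Icc).exists_mapClusterPt
      (f := atTop) (u := fun n => ((γ n).extend, t n))
      (tendsto_principal.2 <| Eventually.of_forall fun n =>
        ⟨⟨(γ n).lipschitzWith_extend,
          ((γ n).extend_of_mem (left_mem_Icc.2 (γ n).len_nonneg)).trans (hγo n)⟩, hT n⟩)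
  have hgeod : ∀ s ∈ Ici (0 : ℝ), ∀ s' ∈ Ici (0 : ℝ), |s - s'| ≤ dist (f s) (f s') := by
    intro s hs s' hs'
    have hcl : IsClosed {w : (ℝ → Y) × ℝ | |s - s'| ≤ dist (w.1 s) (w.1 s')} :=
      isClosed_le continuous_const (((continuous_apply s).comp continuous_fst).dist
        ((continuous_apply s').comp continuous_fst))
    refine hcl.mem_of_mapClusterPt hclus ?_
    filter_upwards [eventually_ge_atTop ⌈max s s'⌉₊] with n hn
    have hlen : max s s' ≤ (γ n).len := (Nat.ceil_le.1 hn).trans (hγlen n)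
    have hs₁ : s ∈ Icc 0 (γ n).len := ⟨hs, (le_max_left _ _).trans hlen⟩
    have hs₁' : s' ∈ Icc 0 (γ n).len := ⟨hs', (le_max_right _ _).trans hlen⟩
    show |s - s'| ≤ dist ((γ n).extend s) ((γ n).extend s')
    rw [(γ n).extend_of_mem hs₁, (γ n).extend_of_mem hs₁', (γ n).isom s hs₁ s' hs₁']
  have hnear : dist p (f t₁) ≤ K + |t₁ - t₁| := by
    have hcl : IsClosed {w : (ℝ → Y) × ℝ | dist p (w.1 t₁) ≤ K + |w.2 - t₁|} :=
      isClosed_le (continuous_const.dist ((continuous_apply t₁).comp continuous_fst))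
        (continuous_const.add ((continuous_snd.sub continuous_const).abs))
    refine hcl.mem_of_mapClusterPt hclus (Eventually.of_forall fun n => ?_)
    show dist p ((γ n).extend t₁) ≤ K + |t n - t₁|
    have := (γ n).lipschitzWith_extend.dist_le_mul (t n) t₁
    rw [NNReal.coe_one, one_mul, Real.dist_eq, (γ n).extend_of_mem (ht n)] at this
    linarith [dist_triangle p ((γ n).f (t n)) ((γ n).extend t₁), htp n]
  refine ⟨f, hf₀, fun s hs s' hs' => le_antisymm ?_ (hgeod s hs s' hs'),
    (infDist_le_dist_of_mem (mem_image_of_mem f ht₁.1)).trans (by simpa using hnear)⟩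
  simpa [Real.dist_eq] using hf.dist_le_mul s s'

end RayLimit

theorem dead_end_depth_uniformly_finite_general
    {Y G : Type*} [MetricSpace Y] [ProperSpace Y] [Group G] [MulAction G Y]
    (hgeo : GeodesicSpace Y)
    (hiso : ∀ g : G, Isometry (fun y : Y => g • y))
    (o : Y)
    (hcontr : ∃ g : G, IsContractingElement o g) :
    ∃ R : ℝ, 0 < R ∧ ∀ g : G, ∃ γ : ℝ → Y,
      γ 0 = o ∧
      (∀ s ∈ Set.Ici (0 : ℝ), ∀ t ∈ Set.Ici (0 : ℝ), dist (γ s) (γ t) = |s - t|) ∧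
      Metric.infDist (g • o) (γ '' Set.Ici (0 : ℝ)) ≤ R := by
  obtain ⟨h, -, ⟨C, hC, hX⟩, c, hc, hQI⟩ := hcontr
  have horbit : cyclicOrbit o h = range fun n : ℤ => h ^ n • o := by
    ext y
    exact exists_congr fun n => eq_comm
  have hR : 0 < c ^ 2 * (8 * C + c + 1) + 4 * C + c := by positivity
  refine ⟨_, hR, fun g => exists_geodesicRay_of_segments fun n => ?_⟩
  -- translate by `g⁻¹` and use geodesics from `g⁻¹ • o` to far targets, which pass near `o`
  obtain ⟨z, hz, hnear⟩ := exists_far_target hc (by linarith) (fun m n => (hQI m n).1)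
    (fun m n => (hQI m n).2) (horbit ▸ hX) (g⁻¹ • o) (n + dist o (g⁻¹ • o))
  obtain ⟨σ, hσ₀, hσ₁⟩ := hgeo (g⁻¹ • o) z
  simp only [zpow_zero, one_smul] at hz hnear
  refine ⟨σ.map _ (hiso g), smul_inv_smul g o ▸ congrArg (g • ·) hσ₀, ?_, ?_⟩
  · change (n : ℝ) ≤ σ.len
    rw [← σ.dist_source_target, hσ₀, hσ₁]
    linarith [dist_triangle o (g⁻¹ • o) z]
  · rw [σ.image_map]
    exact (infDist_image (hiso g)).trans_le (hnear σ hσ₀ hσ₁)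

/-- uniformly finite dead-end depth. -/
theorem dead_end_depth_uniformly_finite
    {Y G : Type*} [MetricSpace Y] [ProperSpace Y] [Group G] [MulAction G Y]
    (hgeo : GeodesicSpace Y)
    (hiso : ∀ g : G, Isometry (fun y : Y => g • y))
    (o : Y)
    (hproper : ∀ r : ℝ, {g : G | dist o (g • o) ≤ r}.Finite)
    (hne : NonElementary G)
    (hcontr : ∃ g : G, IsContractingElement o g) :
    ∃ R : ℝ, 0 < R ∧ ∀ g : G, ∃ γ : ℝ → Y,
      γ 0 = o ∧
      (∀ s ∈ Set.Ici (0 : ℝ), ∀ t ∈ Set.Ici (0 : ℝ), dist (γ s) (γ t) = |s - t|) ∧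
      Metric.infDist (g • o) (γ '' Set.Ici (0 : ℝ)) ≤ R :=
  dead_end_depth_uniformly_finite_general hgeo hiso o hcontr
end

section
/- Let a group G act properly by isometries on a proper geodesic metric space (Y,d) with basepoint o, and let h₁, h₂ ∈ G be two contracting elements. Then either the orbits ⟨h₁⟩·o and ⟨h₂⟩·o have bounded intersection (for every r > 0 the set N_r(⟨h₁⟩·o) ∩ N_r(⟨h₂⟩·o) has finite diameter), or they have finite Hausdorff distance and h₁ ∈ E(h₂). -/
open Metric Set Filter

/-!
If the `r`-neighbourhoods of `⟨h₁⟩·o` and `⟨h₂⟩·o` have unbounded intersection, then infinitely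
many `h₁ᵐ·o` lie within bounded distance of some `h₂ⁿ⁽ᵐ⁾·o`. The elements `h₂⁻ⁿ⁽ᵐ⁾ h₁ᵐ` then move
`o` a bounded amount, so by properness two of them coincide, which gives `h₁ᵃ = h₂ᵇ` with `a ≠ 0`,
and `b ≠ 0` because `h₁` has infinite order. Commensurable cyclic subgroups have orbits at finite
Hausdorff distance, and since `h₁` preserves `⟨h₁⟩·o`, the translate `h₁⟨h₂⟩·o` stays at finite
Hausdorff distance from `⟨h₂⟩·o`.
-/

open Metric Set

theorem inter_setOf_infDist_le_subset_thickening {X : Type*} [PseudoMetricSpace X]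
    {A : Set X} (hA : A.Nonempty) (B : Set X) (r : ℝ) :
    {y | infDist y A ≤ r} ∩ {y | infDist y B ≤ r} ⊆
      thickening (r + 1) {x ∈ A | infDist x B < 2 * r + 1} := by
  rintro y ⟨hyA, hyB⟩
  obtain ⟨x, hxA, hyx⟩ := (infDist_lt_iff hA).1 (hyA.trans_lt (lt_add_one r))
  refine mem_thickening_iff.2 ⟨x, ⟨hxA, ?_⟩, hyx⟩
  calc infDist x B ≤ infDist y B + dist x y := infDist_le_infDist_add_dist
    _ < r + (r + 1) := by rw [dist_comm]; exact add_lt_add_of_le_of_lt hyB hyx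
    _ = 2 * r + 1 := by ring

section CyclicOrbit

variable {Y G : Type*} [MetricSpace Y] [Group G] [MulAction G Y]

theorem cyclicOrbit_nonempty (o : Y) (h : G) : (cyclicOrbit o h).Nonempty :=
  ⟨o, 0, by rw [zpow_zero, one_smul]⟩

theorem image_smul_cyclicOrbit_self (o : Y) (h : G) :
    (h • ·) '' cyclicOrbit o h = cyclicOrbit o h := by
  ext y
  constructor
  · rintro ⟨_, ⟨n, rfl⟩, rfl⟩
    exact ⟨1 + n, by rw [zpow_one_add, mul_smul]⟩
  · rintro ⟨n, rfl⟩
    refine ⟨h ^ (n - 1) • o, ⟨n - 1, rfl⟩, ?_⟩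
    simp only [smul_smul, ← zpow_one_add, add_sub_cancel]

theorem mem_Egroup_of_hausdorffEDist_ne_top {g h : G} {o : Y}
    (hfin : hausdorffEDist ((g • ·) '' cyclicOrbit o h) (cyclicOrbit o h) ≠ ⊤) :
    g ∈ Egroup o h := by
  set D := hausdorffDist ((g • ·) '' cyclicOrbit o h) (cyclicOrbit o h)
  refine ⟨D + 1, add_pos_of_nonneg_of_pos hausdorffDist_nonneg one_pos,
    fun y hy => ?_, fun y hy => ?_⟩
  · exact (infDist_le_hausdorffDist_of_mem hy hfin).trans (le_add_of_nonneg_right zero_le_one)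
  · refine (infDist_le_hausdorffDist_of_mem hy (by rwa [hausdorffEDist_comm])).trans ?_
    rw [hausdorffDist_comm]
    exact le_add_of_nonneg_right zero_le_one

variable [IsIsometricSMul G Y]

theorem exists_zpow_eq_of_infinite {o : Y}
    (hproper : ∀ r : ℝ, {g : G | dist o (g • o) ≤ r}.Finite) {h₁ h₂ : G} {S : Set ℤ}
    (hS : S.Infinite) {R : ℝ}
    (hR : ∀ m ∈ S, infDist (h₁ ^ m • o) (cyclicOrbit o h₂) < R) :
    ∃ a b : ℤ, a ≠ 0 ∧ h₁ ^ a = h₂ ^ b := by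
  have hclose : ∀ m ∈ S, ∃ n : ℤ, dist (h₁ ^ m • o) (h₂ ^ n • o) < R := fun m hm => by
    obtain ⟨_, ⟨n, rfl⟩, hn⟩ := (infDist_lt_iff (cyclicOrbit_nonempty o h₂)).1 (hR m hm)
    exact ⟨n, hn⟩
  choose! n hn using hclose
  have hmaps : MapsTo (fun m => (h₂ ^ n m)⁻¹ * h₁ ^ m) S {g | dist o (g • o) ≤ R} :=
    fun m hm => by
      rw [mem_ofPred_eq, mul_smul, ← dist_smul (h₂ ^ n m), smul_inv_smul, dist_comm]
      exact (hn m hm).le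
  obtain ⟨m, -, m', -, hne, heq⟩ := hS.exists_ne_map_eq_of_mapsTo hmaps (hproper R)
  rw [inv_mul_eq_iff_eq_mul] at heq
  refine ⟨m - m', n m - n m', sub_ne_zero.2 hne, ?_⟩
  rw [zpow_sub, zpow_sub, heq]
  group

theorem exists_zpow_eq_of_not_isBounded {o : Y}
    (hproper : ∀ r : ℝ, {g : G | dist o (g • o) ≤ r}.Finite) {h₁ h₂ : G} {r : ℝ}
    (hun : ¬ Bornology.IsBounded
      ({y | infDist y (cyclicOrbit o h₁) ≤ r} ∩ {y | infDist y (cyclicOrbit o h₂) ≤ r})) :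
    ∃ a b : ℤ, a ≠ 0 ∧ h₁ ^ a = h₂ ^ b := by
  set S := {m : ℤ | infDist (h₁ ^ m • o) (cyclicOrbit o h₂) < 2 * r + 1}
  refine exists_zpow_eq_of_infinite hproper (S := S) (fun hS => hun ?_) fun m hm => hm
  have hsub : {x ∈ cyclicOrbit o h₁ | infDist x (cyclicOrbit o h₂) < 2 * r + 1} ⊆
      (h₁ ^ · • o) '' S := by
    rintro _ ⟨⟨m, rfl⟩, hm⟩
    exact ⟨m, hm, rfl⟩
  exact (((hS.image _).isBounded.subset hsub).thickening).subset
    (inter_setOf_infDist_le_subset_thickening (cyclicOrbit_nonempty o h₁) _ r)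

theorem exists_dist_zpow_smul_le_of_zpow_eq {u v : G} {a b : ℤ} (ha : a ≠ 0)
    (heq : u ^ a = v ^ b) (o : Y) :
    ∃ D : ℝ, ∀ m : ℤ, ∃ n : ℤ, dist (u ^ m • o) (v ^ n • o) ≤ D := by
  obtain ⟨D, hD⟩ := ((finite_Ico (0 : ℤ) |a|).image fun s => dist (u ^ s • o) o).bddAbove
  refine ⟨D, fun m => ⟨b * (m / a), ?_⟩⟩
  have hsplit : u ^ m = v ^ (b * (m / a)) * u ^ (m % a) := by
    conv_lhs => rw [← Int.mul_ediv_add_emod m a]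
    rw [zpow_add, zpow_mul, heq, zpow_mul]
  calc dist (u ^ m • o) (v ^ (b * (m / a)) • o) = dist (u ^ (m % a) • o) o := by
        rw [hsplit, mul_smul, dist_smul]
    _ ≤ D := hD ⟨m % a, ⟨Int.emod_nonneg m ha, Int.emod_lt_abs m ha⟩, rfl⟩

theorem hausdorffEDist_cyclicOrbit_ne_top_of_zpow_eq {u v : G} {a b : ℤ} (ha : a ≠ 0)
    (hb : b ≠ 0) (heq : u ^ a = v ^ b) (o : Y) :
    hausdorffEDist (cyclicOrbit o u) (cyclicOrbit o v) ≠ ⊤ := by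
  obtain ⟨D₁, hD₁⟩ := exists_dist_zpow_smul_le_of_zpow_eq ha heq o
  obtain ⟨D₂, hD₂⟩ := exists_dist_zpow_smul_le_of_zpow_eq hb heq.symm o
  refine ne_top_of_le_ne_top ENNReal.ofReal_ne_top
    (hausdorffEDist_le_of_mem_edist (r := ENNReal.ofReal (max D₁ D₂)) ?_ ?_)
  · rintro _ ⟨m, rfl⟩
    obtain ⟨n, hn⟩ := hD₁ m
    exact ⟨_, ⟨n, rfl⟩, by
      rw [edist_dist]; exact ENNReal.ofReal_le_ofReal (hn.trans (le_max_left _ _))⟩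
  · rintro _ ⟨m, rfl⟩
    obtain ⟨n, hn⟩ := hD₂ m
    exact ⟨_, ⟨n, rfl⟩, by
      rw [edist_dist]; exact ENNReal.ofReal_le_ofReal (hn.trans (le_max_right _ _))⟩

theorem hausdorffEDist_image_smul_cyclicOrbit_ne_top {u v : G} {o : Y}
    (hfin : hausdorffEDist (cyclicOrbit o u) (cyclicOrbit o v) ≠ ⊤) :
    hausdorffEDist ((u • ·) '' cyclicOrbit o v) (cyclicOrbit o v) ≠ ⊤ := by
  have hsmul : hausdorffEDist ((u • ·) '' cyclicOrbit o v) (cyclicOrbit o u) =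
      hausdorffEDist (cyclicOrbit o v) (cyclicOrbit o u) := by
    conv_lhs => rw [← image_smul_cyclicOrbit_self o u]
    exact hausdorffEDist_image (isometry_smul Y u)
  refine ne_top_of_le_ne_top ?_ (hausdorffEDist_triangle (t := cyclicOrbit o u))
  exact ENNReal.add_ne_top.2 ⟨by rwa [hsmul, hausdorffEDist_comm], hfin⟩

end CyclicOrbit

theorem contracting_elements_dichotomy_general
    {Y G : Type*} [MetricSpace Y] [Group G] [MulAction G Y]
    (hiso : ∀ g : G, Isometry (fun y : Y => g • y))
    (o : Y)
    (hproper : ∀ r : ℝ, {g : G | dist o (g • o) ≤ r}.Finite)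
    (h₁ h₂ : G)
    (hc1 : IsContractingElement o h₁) :
    (∀ r : ℝ, 0 < r → Bornology.IsBounded
        ({y : Y | Metric.infDist y (cyclicOrbit o h₁) ≤ r} ∩
          {y : Y | Metric.infDist y (cyclicOrbit o h₂) ≤ r})) ∨
      (EMetric.hausdorffEdist (cyclicOrbit o h₁) (cyclicOrbit o h₂) ≠ ⊤ ∧
        h₁ ∈ Egroup o h₂) := by
  have : IsIsometricSMul G Y := ⟨hiso⟩
  refine or_iff_not_imp_left.2 fun hunb => ?_
  push Not at hunb
  obtain ⟨r, -, hun⟩ := hunb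
  obtain ⟨a, b, ha, heq⟩ := exists_zpow_eq_of_not_isBounded hproper hun
  have hb : b ≠ 0 := by
    rintro rfl
    exact hc1.1 (isOfFinOrder_iff_zpow_eq_one.2 ⟨a, ha, by rwa [zpow_zero] at heq⟩)
  have hfin := hausdorffEDist_cyclicOrbit_ne_top_of_zpow_eq ha hb heq o
  exact ⟨hfin, mem_Egroup_of_hausdorffEDist_ne_top
    (hausdorffEDist_image_smul_cyclicOrbit_ne_top hfin)⟩

/-- dichotomy for orbits of two contracting elements. -/
theorem contracting_elements_dichotomy
    {Y G : Type*} [MetricSpace Y] [ProperSpace Y] [Group G] [MulAction G Y]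
    (hgeo : GeodesicSpace Y)
    (hiso : ∀ g : G, Isometry (fun y : Y => g • y))
    (o : Y)
    (hproper : ∀ r : ℝ, {g : G | dist o (g • o) ≤ r}.Finite)
    (h₁ h₂ : G)
    (hc1 : IsContractingElement o h₁) (hc2 : IsContractingElement o h₂) :
    (∀ r : ℝ, 0 < r → Bornology.IsBounded
        ({y : Y | Metric.infDist y (cyclicOrbit o h₁) ≤ r} ∩
          {y : Y | Metric.infDist y (cyclicOrbit o h₂) ≤ r})) ∨
      (EMetric.hausdorffEdist (cyclicOrbit o h₁) (cyclicOrbit o h₂) ≠ ⊤ ∧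
        h₁ ∈ Egroup o h₂) :=
  contracting_elements_dichotomy_general hiso o hproper h₁ h₂ hc1
end

section
/- Let k ≥ 1 be an integer and let (a_n)_{n≥1} be a sequence of positive real numbers satisfying a_n·a_m ≤ Σ_{j=−k}^{k} a_{n+m−j} for all integers n, m ≥ 1 with n + m − k ≥ 1. Then the limit ω := lim_{n→∞} (1/n)·log(a₁ + a₂ + ⋯ + a_n) exists (as an element of ℝ ∪ {−∞, +∞}), and if ω < ∞ then there is a constant c > 0 such that a_n ≤ c·exp(n·ω) for all n ≥ 1. -/
/-!
Write `S n = a 1 + ⋯ + a n` and `C = 2k + 1`. Summing the hypothesis over the second index gives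
`a m * S n ≤ C * S (n + m + k)` for `m ≥ k`: the partial sums gain a factor `a m / C` every `m + k`
steps, so `ω := liminf log (S n) / n ≥ log (a m / C) / (m + k)`. When `ω` is finite this reads
`a m ≤ C e^{kω} e^{mω}`, whence `S n ≤ c n e^{nω}` and `limsup log (S n) / n ≤ ω`.
-/

open Filter Finset Real

noncomputable def logGrowth (v : ℕ → ℝ) (n : ℕ) : EReal := ((log (v n) / n : ℝ) : EReal)

lemma le_liminf_logGrowth {v : ℕ → ℝ} {α β : ℝ}
    (h : ∀ᶠ n : ℕ in atTop, α * n + β ≤ log (v n)) :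
    (α : EReal) ≤ liminf (logGrowth v) atTop := by
  have hlim : Tendsto (fun n : ℕ => α + β / n) atTop (nhds α) := by
    simpa using tendsto_const_nhds.add (tendsto_const_div_atTop_nhds_zero_nat β)
  rw [← (EReal.tendsto_coe.2 hlim).liminf_eq]
  refine liminf_le_liminf ?_
  filter_upwards [h, eventually_gt_atTop 0] with n hn hn₀
  have hn₀ : (0 : ℝ) < n := Nat.cast_pos.2 hn₀
  rw [logGrowth, EReal.coe_le_coe_iff, le_div_iff₀ hn₀]
  calc (α + β / n) * n = α * n + β := by field_simp
    _ ≤ log (v n) := hn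

lemma limsup_logGrowth_le {v : ℕ → ℝ} {α β : ℝ}
    (h : ∀ᶠ n : ℕ in atTop, log (v n) ≤ α * n + log n + β) :
    limsup (logGrowth v) atTop ≤ α := by
  have hlog : Tendsto (fun n : ℕ => log n / n) atTop (nhds 0) :=
    isLittleO_log_id_atTop.tendsto_div_nhds_zero.comp tendsto_natCast_atTop_atTop
  have hlim : Tendsto (fun n : ℕ => α + log n / n + β / n) atTop (nhds α) := by
    simpa using (tendsto_const_nhds.add hlog).add (tendsto_const_div_atTop_nhds_zero_nat β)
  rw [← (EReal.tendsto_coe.2 hlim).limsup_eq]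
  refine limsup_le_limsup ?_
  filter_upwards [h, eventually_gt_atTop 0] with n hn hn₀
  have hn₀ : (0 : ℝ) < n := Nat.cast_pos.2 hn₀
  rw [logGrowth, EReal.coe_le_coe_iff, div_le_iff₀ hn₀]
  calc log (v n) ≤ α * n + log n + β := hn
    _ = (α + log n / n + β / n) * n := by field_simp

lemma le_liminf_logGrowth_of_mul_le_shift {v : ℕ → ℝ} (hv : Monotone v) {n₀ p : ℕ}
    (hp : 0 < p) {r : ℝ} (hr : 0 < r) (hv₀ : 0 < v n₀)
    (h : ∀ n ≥ n₀, r * v n ≤ v (n + p)) :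
    ((log r / p : ℝ) : EReal) ≤ liminf (logGrowth v) atTop := by
  set α := log r / p
  have hp' : (0 : ℝ) < p := Nat.cast_pos.2 hp
  have hαp : α * p = log r := div_mul_cancel₀ _ hp'.ne'
  -- each shift by `p` adds at least `log r = α * p` to `log ∘ v`
  suffices ∀ n ≥ n₀, α * n + (log (v n₀) - |α| * (n₀ + p)) ≤ log (v n) from
    le_liminf_logGrowth (eventually_atTop.2 ⟨n₀, this⟩)
  intro n
  induction n using Nat.strong_induction_on with
  | _ n ih =>
    intro hn
    by_cases hnp : n < n₀ + p
    · have hαn : α * n ≤ |α| * (n₀ + p) := by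
        have : (n : ℝ) ≤ n₀ + p := by exact_mod_cast hnp.le
        nlinarith [le_abs_self α, abs_nonneg α]
      have := log_le_log hv₀ (hv hn)
      linarith
    · obtain ⟨m, rfl⟩ : ∃ m, n = m + p := ⟨n - p, by omega⟩
      have hm : n₀ ≤ m := by omega
      have hvm : 0 < v m := hv₀.trans_le (hv hm)
      have hstep : log r + log (v m) ≤ log (v (m + p)) := by
        rw [← log_mul hr.ne' hvm.ne']
        exact log_le_log (by positivity) (h m hm)
      have := ih m (by omega) hm
      push_cast
      linarith

lemma zero_le_liminf_logGrowth {v : ℕ → ℝ} (hv : Monotone v) {n₀ : ℕ} (hv₀ : 0 < v n₀) :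
    0 ≤ liminf (logGrowth v) atTop := by
  simpa using le_liminf_logGrowth_of_mul_le_shift hv one_pos one_pos hv₀
    (fun n _ => by simpa using hv n.le_succ)

noncomputable def partialSum (a : ℕ → ℝ) (n : ℕ) : ℝ := ∑ i ∈ Icc 1 n, a i

section PartialSum

variable {a : ℕ → ℝ}

lemma partialSum_monotone (ha : ∀ n, 1 ≤ n → 0 ≤ a n) : Monotone (partialSum a) :=
  monotone_nat_of_le_succ fun n => by
    simpa [partialSum, sum_Icc_succ_top] using ha (n + 1) (by omega)

lemma le_partialSum (ha : ∀ n, 1 ≤ n → 0 ≤ a n) {m n : ℕ} (hm : 1 ≤ m) (hmn : m ≤ n) :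
    a m ≤ partialSum a n :=
  single_le_sum (fun i hi => ha i (mem_Icc.1 hi).1) (mem_Icc.2 ⟨hm, hmn⟩)

lemma sum_shift_le_partialSum (ha : ∀ n, 1 ≤ n → 0 ≤ a n) (n s : ℕ) :
    ∑ i ∈ Icc 1 n, a (i + s) ≤ partialSum a (n + s) := by
  have hshift : ∑ i ∈ Icc 1 n, a (i + s) = ∑ i ∈ Icc (1 + s) (n + s), a i := by
    rw [← map_add_right_Icc, sum_map]
    rfl
  rw [hshift]
  exact sum_le_sum_of_subset_of_nonneg (Icc_subset_Icc_left (by omega))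
    fun i hi _ => ha i (mem_Icc.1 hi).1

lemma partialSum_pos (hpos : ∀ n, 1 ≤ n → 0 < a n) {n : ℕ} (hn : 1 ≤ n) : 0 < partialSum a n :=
  (hpos n hn).trans_le (le_partialSum (fun i hi => (hpos i hi).le) hn le_rfl)

lemma limsup_logGrowth_partialSum_le (hpos : ∀ n, 1 ≤ n → 0 < a n) {c w : ℝ}
    (hc : 0 < c) (hw : 0 ≤ w) (hbound : ∀ n, 1 ≤ n → a n ≤ c * exp (n * w)) :
    limsup (logGrowth (partialSum a)) atTop ≤ w := by
  refine limsup_logGrowth_le (β := log c) (eventually_atTop.2 ⟨1, fun n hn₁ => ?_⟩)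
  have hsum : partialSum a n ≤ n * (c * exp (n * w)) := by
    have := sum_le_card_nsmul (Icc 1 n) a (c * exp (n * w)) fun i hi => by
      obtain ⟨hi, hin⟩ := mem_Icc.1 hi
      refine (hbound i hi).trans (mul_le_mul_of_nonneg_left (exp_le_exp.2 ?_) hc.le)
      exact mul_le_mul_of_nonneg_right (by exact_mod_cast hin) hw
    simpa [partialSum] using this
  have hn : (0 : ℝ) < n := by exact_mod_cast hn₁
  calc log (partialSum a n) ≤ log (n * (c * exp (n * w))) :=
        log_le_log (partialSum_pos hpos hn₁) hsum
    _ = w * n + log n + log c := by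
        rw [log_mul hn.ne' (by positivity), log_mul hc.ne' (exp_pos _).ne', log_exp]
        ring

end PartialSum

section Peigne

variable {k : ℕ} {a : ℕ → ℝ} (hpos : ∀ n, 1 ≤ n → 0 < a n)
  (hsub : ∀ n m : ℕ, 1 ≤ n → 1 ≤ m → k + 1 ≤ n + m →
    a n * a m ≤ ∑ j ∈ range (2 * k + 1), a (n + m - k + j))
include hpos hsub

lemma mul_partialSum_le {m : ℕ} (hm : 1 ≤ m) (hkm : k ≤ m) (n : ℕ) :
    a m * partialSum a n ≤ (2 * k + 1 : ℕ) * partialSum a (n + (m + k)) := by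
  have ha : ∀ n, 1 ≤ n → 0 ≤ a n := fun n hn => (hpos n hn).le
  calc a m * partialSum a n
      ≤ ∑ i ∈ Icc 1 n, ∑ j ∈ range (2 * k + 1), a (i + (m - k + j)) := by
        rw [partialSum, mul_sum]
        refine sum_le_sum fun i hi => ?_
        have hi := (mem_Icc.1 hi).1
        exact (hsub m i hm hi (by omega)).trans_eq
          (sum_congr rfl fun j _ => congrArg a (by omega))
    _ = ∑ j ∈ range (2 * k + 1), ∑ i ∈ Icc 1 n, a (i + (m - k + j)) := sum_comm
    _ ≤ ∑ _j ∈ range (2 * k + 1), partialSum a (n + (m + k)) := by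
        refine sum_le_sum fun j hj => ?_
        have hj := mem_range.1 hj
        exact (sum_shift_le_partialSum ha n _).trans (partialSum_monotone ha (by omega))
    _ = (2 * k + 1 : ℕ) * partialSum a (n + (m + k)) := by
        rw [sum_const, card_range, nsmul_eq_mul]

lemma le_liminf_logGrowth_partialSum {m : ℕ} (hm : 1 ≤ m) (hkm : k ≤ m) :
    ((log (a m / (2 * k + 1 : ℕ)) / (m + k : ℕ) : ℝ) : EReal) ≤
      liminf (logGrowth (partialSum a)) atTop := by
  have hC : (0 : ℝ) < (2 * k + 1 : ℕ) := by positivity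
  refine le_liminf_logGrowth_of_mul_le_shift
    (partialSum_monotone fun n hn => (hpos n hn).le) (by omega) (div_pos (hpos m hm) hC)
    (partialSum_pos hpos le_rfl) fun n _ => ?_
  rw [div_mul_eq_mul_div, div_le_iff₀ hC]
  linarith [mul_partialSum_le hpos hsub hm hkm n]

lemma exists_le_mul_exp_of_liminf_le {w : ℝ} (hw : 0 ≤ w)
    (hω : liminf (logGrowth (partialSum a)) atTop ≤ w) :
    ∃ c : ℝ, 0 < c ∧ ∀ n, 1 ≤ n → a n ≤ c * exp (n * w) := by
  have ha : ∀ n, 1 ≤ n → 0 ≤ a n := fun n hn => (hpos n hn).le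
  set C : ℝ := ((2 * k + 1 : ℕ) : ℝ)
  have hC : 0 < C := by positivity
  have hSk : 0 ≤ partialSum a k := partialSum_monotone ha (Nat.zero_le k)
  refine ⟨C * exp (k * w) + partialSum a k, by positivity, fun n hn => ?_⟩
  rcases le_or_gt n k with hnk | hkn
  · calc a n ≤ partialSum a k := le_partialSum ha hn hnk
      _ ≤ C * exp (k * w) + partialSum a k := le_add_of_nonneg_left (by positivity)
      _ ≤ (C * exp (k * w) + partialSum a k) * exp (n * w) :=
        le_mul_of_one_le_right (by positivity) (one_le_exp (by positivity))
  · have hL := EReal.coe_le_coe_iff.1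
      ((le_liminf_logGrowth_partialSum hpos hsub hn hkn.le).trans hω)
    rw [div_le_iff₀ (by positivity), log_le_iff_le_exp (div_pos (hpos n hn) hC),
      div_le_iff₀ hC] at hL
    calc a n ≤ exp (w * (n + k : ℕ)) * C := hL
      _ = C * exp (k * w) * exp (n * w) := by
        rw [mul_comm, mul_assoc, ← exp_add]
        push_cast
        ring_nf
      _ ≤ (C * exp (k * w) + partialSum a k) * exp (n * w) := by gcongr; linarith

end Peigne

theorem peigne_submultiplicative_lemma_general
    (k : ℕ) (a : ℕ → ℝ)
    (hpos : ∀ n : ℕ, 1 ≤ n → 0 < a n)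
    (hsub : ∀ n m : ℕ, 1 ≤ n → 1 ≤ m → k + 1 ≤ n + m →
      a n * a m ≤ ∑ j ∈ Finset.range (2 * k + 1), a (n + m - k + j)) :
    ∃ ω : EReal,
      Filter.Tendsto
        (fun n : ℕ => ((Real.log (∑ i ∈ Finset.Icc 1 n, a i) / (n : ℝ) : ℝ) : EReal))
        Filter.atTop (nhds ω) ∧
      (ω < ⊤ → ∃ c : ℝ, 0 < c ∧ ∀ n : ℕ, 1 ≤ n →
        a n ≤ c * Real.exp ((n : ℝ) * ω.toReal)) := by
  set ω := liminf (logGrowth (partialSum a)) atTop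
  have hω₀ : 0 ≤ ω := zero_le_liminf_logGrowth (partialSum_monotone fun n hn => (hpos n hn).le)
    (partialSum_pos hpos le_rfl)
  have hω_real (hω : ω < ⊤) : ((ω.toReal : ℝ) : EReal) = ω :=
    EReal.coe_toReal hω.ne (ne_bot_of_le_ne_bot EReal.zero_ne_bot hω₀)
  have hbound (hω : ω < ⊤) : ∃ c : ℝ, 0 < c ∧ ∀ n : ℕ, 1 ≤ n → a n ≤ c * exp (n * ω.toReal) :=
    exists_le_mul_exp_of_liminf_le hpos hsub (EReal.toReal_nonneg hω₀) (hω_real hω).ge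
  have hlimsup : limsup (logGrowth (partialSum a)) atTop ≤ ω := by
    rcases eq_top_or_lt_top ω with hω | hω
    · exact hω ▸ le_top
    · obtain ⟨c, hc, hle⟩ := hbound hω
      exact (limsup_logGrowth_partialSum_le hpos hc (EReal.toReal_nonneg hω₀) hle).trans
        (hω_real hω).le
  exact ⟨ω, tendsto_of_liminf_eq_limsup rfl (le_antisymm hlimsup liminf_le_limsup), hbound⟩

/-- a sub-multiplicativity lemma of Peigné: the exponential growth
rate of the partial sums exists and bounds the sequence from above. -/
theorem peigne_submultiplicative_lemma
    (k : ℕ) (hk : 1 ≤ k) (a : ℕ → ℝ)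
    (hpos : ∀ n : ℕ, 1 ≤ n → 0 < a n)
    (hsub : ∀ n m : ℕ, 1 ≤ n → 1 ≤ m → k + 1 ≤ n + m →
      a n * a m ≤ ∑ j ∈ Finset.range (2 * k + 1), a (n + m - k + j)) :
    ∃ ω : EReal,
      Filter.Tendsto
        (fun n : ℕ => ((Real.log (∑ i ∈ Finset.Icc 1 n, a i) / (n : ℝ) : ℝ) : EReal))
        Filter.atTop (nhds ω) ∧
      (ω < ⊤ → ∃ c : ℝ, 0 < c ∧ ∀ n : ℕ, 1 ≤ n →
        a n ≤ c * Real.exp ((n : ℝ) * ω.toReal)) :=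
  peigne_submultiplicative_lemma_general k a hpos hsub
end
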